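/- arXiv:1805.01927 — 2 statements merged into one kernel-verified Lean document; each statement's English description precedes it below -/
import Mathlib

section
/- Let $m \geq 1$, let $p$ be an integer, and let $A$ be a nonzero complex number. Let $C$ be the $m \times m$ complex matrix with entries $C_{jk} = (-1)^{k-j} A^{p(k^2-1) + p(j - j^2)}$ if $j \leq k$ and $C_{jk} = 0$ otherwise (indices $1 \leq j, k \leq m$; $A^n$ for $n \in \mathbb{Z}$ denotes integer powers of the nonzero number $A$). Then $C$ is invertible, and its inverse is the matrix with entries $(C^{-1})_{jk} = A^{p(1 - j^2) + p(k^2 - k)}$ if $k = j$ or $k = j+1$, and $(C^{-1})_{jk} = 0$ otherwise. -/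
/-!
The entries of `C` factor as `u j * T j k * v k`, where `T` is the upper triangular matrix of
alternating signs `(-1)^(k-j)`; that is, `C = diag u * T * diag v`. The inverse of `T` is the
upper bidiagonal matrix `S` of ones (each column of `T * S` is the sum of two consecutive columns
of `T`, which cancel off the diagonal), so `C⁻¹ = diag v⁻¹ * S * diag u⁻¹`, and this is `C'`.
-/

open Finset

namespace Matrix

variable (R : Type*) [Ring R] (m : ℕ)

def alternatingUpper : Matrix (Fin m) (Fin m) R :=
  of fun j k => if j ≤ k then (-1) ^ ((k : ℕ) - (j : ℕ)) else 0

def upperBidiagonalOnes : Matrix (Fin m) (Fin m) R :=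
  of fun j k => if (k : ℕ) = (j : ℕ) ∨ (k : ℕ) = (j : ℕ) + 1 then 1 else 0

variable {R}

theorem alternating_sign_succ_add_self (j k : ℕ) :
    ((if j ≤ k + 1 then (-1) ^ (k + 1 - j) else 0) + if j ≤ k then (-1) ^ (k - j) else 0 : R) =
      if j = k + 1 then 1 else 0 := by
  rcases lt_trichotomy j (k + 1) with h | rfl | h
  · rw [if_pos h.le, if_pos (by omega), if_neg h.ne, Nat.sub_add_comm (by omega), pow_succ]
    simp
  · simp
  · rw [if_neg (by omega), if_neg (by omega), if_neg h.ne']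
    simp

theorem alternatingUpper_mul_upperBidiagonalOnes :
    alternatingUpper R m * upperBidiagonalOnes R m = 1 := by
  ext j k
  have hsplit : ∀ l : ℕ, (if (k : ℕ) = l ∨ (k : ℕ) = l + 1 then 1 else 0 : R) =
      (if l = k then 1 else 0) + if l + 1 = (k : ℕ) then 1 else 0 := by
    intro l; split_ifs <;> first | (exfalso; omega) | simp
  simp only [mul_apply, alternatingUpper, upperBidiagonalOnes, of_apply, one_apply, Fin.le_def,
    Fin.ext_iff]
  rw [Fin.sum_univ_eq_sum_range (fun l => (if (j : ℕ) ≤ l then (-1) ^ (l - j) else 0) *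
    if (k : ℕ) = l ∨ (k : ℕ) = l + 1 then (1 : R) else 0)]
  simp only [hsplit, mul_add, mul_ite, mul_one, mul_zero, sum_add_distrib, sum_ite_eq',
    mem_range, k.isLt, if_true]
  obtain ⟨k, hk⟩ := k
  cases k with
  | zero => simp [eq_comm]
  | succ k =>
    simp only [Nat.add_right_cancel_iff, sum_ite_eq', mem_range, show k < m by omega, if_true]
    exact alternating_sign_succ_add_self j k

theorem diagonal_mul_mul_diagonal_mul_inv {n K : Type*} [Fintype n] [DecidableEq n]
    [DivisionRing K] {u v : n → K} (hu : ∀ i, u i ≠ 0) (hv : ∀ i, v i ≠ 0)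
    {T S : Matrix n n K} (hTS : T * S = 1) :
    diagonal u * T * diagonal v * (diagonal v⁻¹ * S * diagonal u⁻¹) = 1 := by
  have hdiag : ∀ w : n → K, (∀ i, w i ≠ 0) → diagonal w * diagonal w⁻¹ = 1 := fun w hw => by
    rw [diagonal_mul_diagonal, ← diagonal_one]
    exact congrArg diagonal (funext fun i => mul_inv_cancel₀ (hw i))
  calc diagonal u * T * diagonal v * (diagonal v⁻¹ * S * diagonal u⁻¹)
      = diagonal u * T * (diagonal v * diagonal v⁻¹) * S * diagonal u⁻¹ := by
        simp only [Matrix.mul_assoc]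
    _ = 1 := by rw [hdiag v hv, Matrix.mul_one, Matrix.mul_assoc _ T S, hTS, Matrix.mul_one,
        hdiag u hu]

end Matrix

open Matrix

theorem cabling_matrix_inverse_general
    (m : ℕ) (p : ℤ) (A : ℂ) (hA : A ≠ 0)
    (C C' : Matrix (Fin m) (Fin m) ℂ)
    (hC : ∀ j k : Fin m, C j k =
      if j ≤ k then
        (-1 : ℂ) ^ ((k : ℕ) - (j : ℕ)) *
          A ^ (p * (((k : ℤ) + 1) ^ 2 - 1) + p * (((j : ℤ) + 1) - ((j : ℤ) + 1) ^ 2))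
      else 0)
    (hC' : ∀ j k : Fin m, C' j k =
      if (k : ℕ) = (j : ℕ) ∨ (k : ℕ) = (j : ℕ) + 1 then
        A ^ (p * (1 - ((j : ℤ) + 1) ^ 2) + p * (((k : ℤ) + 1) ^ 2 - ((k : ℤ) + 1)))
      else 0) :
    IsUnit C ∧ C⁻¹ = C' := by
  set u : Fin m → ℂ := fun j => A ^ (p * (((j : ℤ) + 1) - ((j : ℤ) + 1) ^ 2))
  set v : Fin m → ℂ := fun k => A ^ (p * (((k : ℤ) + 1) ^ 2 - 1))
  have hC_eq : C = diagonal u * alternatingUpper ℂ m * diagonal v := by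
    ext j k
    rw [mul_diagonal, diagonal_mul, hC, alternatingUpper, of_apply]
    split_ifs
    · rw [zpow_add₀ hA]; ring
    · simp
  have hC'_eq : C' = diagonal v⁻¹ * upperBidiagonalOnes ℂ m * diagonal u⁻¹ := by
    ext j k
    rw [mul_diagonal, diagonal_mul, hC', upperBidiagonalOnes, of_apply]
    split_ifs
    · rw [Pi.inv_apply, Pi.inv_apply, ← _root_.zpow_neg, ← _root_.zpow_neg, mul_one,
        ← zpow_add₀ hA]
      congr 1
      ring
    · simp
  have hmul : C * C' = 1 := by
    rw [hC_eq, hC'_eq]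
    exact diagonal_mul_mul_diagonal_mul_inv (fun _ => zpow_ne_zero _ hA)
      (fun _ => zpow_ne_zero _ hA) (alternatingUpper_mul_upperBidiagonalOnes m)
  exact ⟨⟨⟨C, C', hmul, mul_eq_one_comm.mp hmul⟩, rfl⟩, inv_eq_right_inv hmul⟩

theorem cabling_matrix_inverse
    (m : ℕ) (hm : 1 ≤ m) (p : ℤ) (A : ℂ) (hA : A ≠ 0)
    (C C' : Matrix (Fin m) (Fin m) ℂ)
    (hC : ∀ j k : Fin m, C j k =
      if j ≤ k then
        (-1 : ℂ) ^ ((k : ℕ) - (j : ℕ)) *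
          A ^ (p * (((k : ℤ) + 1) ^ 2 - 1) + p * (((j : ℤ) + 1) - ((j : ℤ) + 1) ^ 2))
      else 0)
    (hC' : ∀ j k : Fin m, C' j k =
      if (k : ℕ) = (j : ℕ) ∨ (k : ℕ) = (j : ℕ) + 1 then
        A ^ (p * (1 - ((j : ℤ) + 1) ^ 2) + p * (((k : ℤ) + 1) ^ 2 - ((k : ℤ) + 1)))
      else 0) :
    IsUnit C ∧ C⁻¹ = C' :=
  cabling_matrix_inverse_general m p A hA C C' hC hC'
end

section
/- Let $m \geq 1$, let $p$ be an integer, and let $A$ be a complex number with $|A| = 1$. Let $C$ be the $m \times m$ complex matrix with entries $C_{jk} = (-1)^{k-j} A^{p(k^2-1) + p(j - j^2)}$ if $j \leq k$ and $C_{jk} = 0$ otherwise (indices $1 \leq j, k \leq m$; $A^n$ for $n \in \mathbb{Z}$ denotes integer powers of the nonzero number $A$). Then for every vector $x \in \mathbb{C}^m$, $\|x\|_2 \leq 2 \, \|C x\|_2$, where $\|\cdot\|_2$ denotes the Euclidean (Hermitian $\ell^2$) norm on $\mathbb{C}^m$. -/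
/-!
Writing `a k = A ^ (p * ((k + 1) ^ 2 - 1))` and `b j = A ^ (p * ((j + 1) - (j + 1) ^ 2))`, the
matrix factors as `C = diag b * T * diag a` with `T j k = (-1) ^ (k - j)` for `j ≤ k` and `0`
otherwise, and `|a k| = |b j| = 1`. Two consecutive rows of `T` add up to a unit row, i.e. `T` is
the inverse of the upper bidiagonal all-ones matrix. So for `w = T (a x)` we get
`a j * x j = w j + w (j + 1)` and `|(C x) j| = |w j|`, whence
`‖x‖² ≤ 2 ‖w‖² + 2 ‖shifted w‖² ≤ 4 ‖C x‖²`.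
-/

open Finset

theorem sum_range_succ_le_sum_range {g : ℕ → ℝ} {m : ℕ} (hg0 : 0 ≤ g 0) (hgm : g m = 0) :
    ∑ n ∈ range m, g (n + 1) ≤ ∑ n ∈ range m, g n := by
  have h := (sum_range_succ' g m).symm.trans (sum_range_succ g m)
  rw [hgm] at h
  linarith

theorem EuclideanSpace.norm_le_two_mul_of_le_add_succ {𝕜 E : Type*} [RCLike 𝕜]
    [SeminormedAddGroup E] {m : ℕ} (x y : EuclideanSpace 𝕜 (Fin m)) (w : ℕ → E)
    (hwm : w m = 0) (hx : ∀ j : Fin m, ‖x j‖ ≤ ‖w j‖ + ‖w (j + 1)‖)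
    (hy : ∀ j : Fin m, ‖y j‖ = ‖w j‖) : ‖x‖ ≤ 2 * ‖y‖ := by
  have hsq (j : Fin m) : ‖x j‖ ^ 2 ≤ 2 * ‖w j‖ ^ 2 + 2 * ‖w (j + 1)‖ ^ 2 := by
    nlinarith [hx j, norm_nonneg (x j), sq_nonneg (‖w j‖ - ‖w (j + 1)‖)]
  have hshift : ∑ n ∈ range m, ‖w (n + 1)‖ ^ 2 ≤ ∑ n ∈ range m, ‖w n‖ ^ 2 :=
    sum_range_succ_le_sum_range (g := fun n => ‖w n‖ ^ 2) (sq_nonneg _) (by simp [hwm])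
  have hy2 : ‖y‖ ^ 2 = ∑ n ∈ range m, ‖w n‖ ^ 2 := by
    simp only [EuclideanSpace.norm_sq_eq, hy, Fin.sum_univ_eq_sum_range (fun n => ‖w n‖ ^ 2)]
  refine (pow_le_pow_iff_left₀ (norm_nonneg x) (by positivity) two_ne_zero).mp ?_
  calc ‖x‖ ^ 2 = ∑ j : Fin m, ‖x j‖ ^ 2 := EuclideanSpace.norm_sq_eq x
    _ ≤ ∑ j : Fin m, (2 * ‖w j‖ ^ 2 + 2 * ‖w (j + 1)‖ ^ 2) := sum_le_sum fun j _ => hsq j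
    _ = 2 * ∑ n ∈ range m, ‖w n‖ ^ 2 + 2 * ∑ n ∈ range m, ‖w (n + 1)‖ ^ 2 := by
      rw [Fin.sum_univ_eq_sum_range (fun n => 2 * ‖w n‖ ^ 2 + 2 * ‖w (n + 1)‖ ^ 2),
        sum_add_distrib, mul_sum, mul_sum]
    _ ≤ (2 * ‖y‖) ^ 2 := by rw [mul_pow, hy2]; linarith

section alternatingUpper

variable {R : Type*} [Ring R]

variable (R) in
def alternatingUpper (n k : ℕ) : R :=
  if n ≤ k then (-1) ^ (k - n) else 0

theorem alternatingUpper_add_succ (n k : ℕ) :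
    alternatingUpper R n k + alternatingUpper R (n + 1) k = if k = n then 1 else 0 := by
  unfold alternatingUpper
  rcases lt_trichotomy k n with hkn | rfl | hnk
  · simp [hkn.not_ge, hkn.ne, show ¬ n + 1 ≤ k by omega]
  · simp
  · obtain ⟨d, rfl⟩ := Nat.exists_eq_add_of_lt hnk
    simp [show n + d + 1 - n = d + 1 by omega, show n + d + 1 - (n + 1) = d by omega,
      show n ≤ n + d + 1 by omega, hnk.ne', pow_succ]

theorem alternatingUpper_eq_zero_of_lt {n k : ℕ} (h : k < n) : alternatingUpper R n k = 0 :=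
  if_neg h.not_ge

end alternatingUpper

theorem norm_le_two_mul_norm_toEuclideanLin_of_alternatingUpper {𝕜 : Type*} [RCLike 𝕜]
    {m : ℕ} (C : Matrix (Fin m) (Fin m) 𝕜) (a b : Fin m → 𝕜) (ha : ∀ k, ‖a k‖ = 1)
    (hb : ∀ j, ‖b j‖ = 1) (hC : ∀ j k, C j k = b j * alternatingUpper 𝕜 j k * a k)
    (x : EuclideanSpace 𝕜 (Fin m)) : ‖x‖ ≤ 2 * ‖Matrix.toEuclideanLin C x‖ := by
  set w : ℕ → 𝕜 := fun n => ∑ k : Fin m, alternatingUpper 𝕜 n k * (a k * x k)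
  have hCx (j : Fin m) : Matrix.toEuclideanLin C x j = b j * w j := by
    change C.mulVec (WithLp.ofLp x) j = _
    simp only [Matrix.mulVec, dotProduct, hC, w, mul_sum, mul_assoc]
  have hw (j : Fin m) : w j + w (j + 1) = a j * x j := by
    simp only [w, ← sum_add_distrib, ← add_mul, alternatingUpper_add_succ, Fin.val_inj]
    simp
  have hwm : w m = 0 := sum_eq_zero fun k _ => by
    rw [alternatingUpper_eq_zero_of_lt k.isLt, zero_mul]
  refine EuclideanSpace.norm_le_two_mul_of_le_add_succ _ _ w hwm (fun j => ?_) fun j => ?_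
  · calc ‖x j‖ = ‖w j + w (j + 1)‖ := by rw [hw, norm_mul, ha, one_mul]
      _ ≤ ‖w j‖ + ‖w (j + 1)‖ := norm_add_le _ _
  · rw [hCx, norm_mul, hb, one_mul]

theorem cabling_matrix_lower_bound_general
    (m : ℕ) (p : ℤ) (A : ℂ) (hA : ‖A‖ = 1)
    (C : Matrix (Fin m) (Fin m) ℂ)
    (hC : ∀ j k : Fin m, C j k =
      if j ≤ k then
        (-1 : ℂ) ^ ((k : ℕ) - (j : ℕ)) *
          A ^ (p * (((k : ℤ) + 1) ^ 2 - 1) + p * (((j : ℤ) + 1) - ((j : ℤ) + 1) ^ 2))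
      else 0) :
    ∀ x : EuclideanSpace ℂ (Fin m), ‖x‖ ≤ 2 * ‖Matrix.toEuclideanLin C x‖ := by
  have hA0 : A ≠ 0 := norm_ne_zero_iff.mp (hA ▸ one_ne_zero)
  have hzpow (n : ℤ) : ‖A ^ n‖ = 1 := by rw [norm_zpow, hA, one_zpow]
  refine norm_le_two_mul_norm_toEuclideanLin_of_alternatingUpper C
    (fun k => A ^ (p * (((k : ℤ) + 1) ^ 2 - 1)))
    (fun j => A ^ (p * (((j : ℤ) + 1) - ((j : ℤ) + 1) ^ 2))) (fun _ => hzpow _)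
    (fun _ => hzpow _) fun j k => ?_
  rw [hC, alternatingUpper, zpow_add₀ hA0]
  simp only [Fin.le_def]
  split_ifs <;> ring

theorem cabling_matrix_lower_bound
    (m : ℕ) (hm : 1 ≤ m) (p : ℤ) (A : ℂ) (hA : ‖A‖ = 1)
    (C : Matrix (Fin m) (Fin m) ℂ)
    (hC : ∀ j k : Fin m, C j k =
      if j ≤ k then
        (-1 : ℂ) ^ ((k : ℕ) - (j : ℕ)) *
          A ^ (p * (((k : ℤ) + 1) ^ 2 - 1) + p * (((j : ℤ) + 1) - ((j : ℤ) + 1) ^ 2))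
      else 0) :
    ∀ x : EuclideanSpace ℂ (Fin m), ‖x‖ ≤ 2 * ‖Matrix.toEuclideanLin C x‖ :=
  cabling_matrix_lower_bound_general m p A hA C hC
end
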